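/- Let M be an m × n binary matrix that is (k, l)-list disjunct, and let x ∈ ℝ^n be k-sparse. Suppose for every row M_i, with S_i = supp(M_i) ∩ supp(x), either S_i is empty or M_iᵀ restricted to S_i dotted with x restricted to S_i is nonzero. Then the set T obtained by the standard group testing decoding (remove any column j appearing in a row i with sign(M_iᵀx) = 0), i.e. T = {j ∈ [n] : every row i with M_{i,j} = 1 satisfies sign(M_iᵀx) ≠ 0}, contains supp(x) and has size at most k + l. -/
import Mathlib


open Finset

/-- An `m × n` binary (0/1) matrix is `(k, l)`-list disjunct if for any two disjoint
sets `S, T` of columns with `|S| = k`, `|T| = l`, there is a row in which some column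
of `T` has a nonzero entry but every column of `S` has a zero entry. -/
def ListDisjunct {m n : ℕ} (M : Fin m → Fin n → ℝ) (k l : ℕ) : Prop :=
  ∀ S T : Finset (Fin n), Disjoint S T → S.card = k → T.card = l →
    ∃ i : Fin m, (∃ j ∈ T, M i j ≠ 0) ∧ (∀ j ∈ S, M i j = 0)

theorem list_disjunct_superset_recovery {m n k l : ℕ} (M : Fin m → Fin n → ℝ)
    (hbin : ∀ i j, M i j = 0 ∨ M i j = 1)
    (hM : ListDisjunct M k l)
    (x : Fin n → ℝ) (hsparse : ({j | x j ≠ 0} : Finset (Fin n)).card ≤ k)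
    (hcond : ∀ i : Fin m,
      ({j | M i j ≠ 0 ∧ x j ≠ 0} : Finset (Fin n)) = ∅ ∨
        ∑ j ∈ ({j | M i j ≠ 0 ∧ x j ≠ 0} : Finset (Fin n)), M i j * x j ≠ 0) :
    let T : Finset (Fin n) :=
      {j | ∀ i : Fin m, M i j = 1 → Real.sign (∑ t, M i t * x t) ≠ 0}
    ({j | x j ≠ 0} : Finset (Fin n)) ⊆ T ∧ T.card ≤ k + l := by
  intro T
  set supp : Finset (Fin n) := ({j | x j ≠ 0} : Finset (Fin n)) with hsupp
  have hsum : ∀ i : Fin m, (∑ t, M i t * x t) =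
      ∑ j ∈ ({j | M i j ≠ 0 ∧ x j ≠ 0} : Finset (Fin n)), M i j * x j := by
    intro i
    refine (Finset.sum_subset (Finset.subset_univ _) ?_).symm
    intro t _ ht
    simp only [Finset.mem_filter, Finset.mem_univ, true_and, not_and_or, not_not] at ht
    rcases ht with h | h <;> simp [h]
  have hsub : supp ⊆ T := by
    intro j hj
    simp only [hsupp, Finset.mem_filter, Finset.mem_univ, true_and] at hj
    simp only [T, Finset.mem_filter, Finset.mem_univ, true_and]
    intro i hij
    have hne : ({t | M i t ≠ 0 ∧ x t ≠ 0} : Finset (Fin n)) ≠ ∅ := by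
      intro h
      have : j ∈ ({t | M i t ≠ 0 ∧ x t ≠ 0} : Finset (Fin n)) := by
        simp only [Finset.mem_filter, Finset.mem_univ, true_and]
        exact ⟨by rw [hij]; norm_num, hj⟩
      rw [h] at this
      exact absurd this (Finset.notMem_empty _)
    rcases hcond i with h | h
    · exact absurd h hne
    · rw [Ne, Real.sign_eq_zero_iff, hsum i]
      exact h
  refine ⟨hsub, ?_⟩
  by_contra hcard
  push_neg at hcard
  -- pick T' ⊆ T \ supp of card l
  have hTd : l ≤ (T \ supp).card := by
    have := Finset.le_card_sdiff supp T
    omega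
  obtain ⟨T', hT'sub, hT'card⟩ := Finset.exists_subset_card_eq hTd
  have hn : k + l < n := by
    have := Finset.card_le_univ T
    simp at this
    omega
  have hsuppsub : supp ⊆ Finset.univ \ T' := by
    intro j hj
    simp only [Finset.mem_sdiff, Finset.mem_univ, true_and]
    intro hjT'
    have := hT'sub hjT'
    simp only [Finset.mem_sdiff] at this
    exact this.2 hj
  have hcardle : k ≤ (Finset.univ \ T' : Finset (Fin n)).card := by
    rw [Finset.card_sdiff_of_subset (Finset.subset_univ _), hT'card]
    simp only [Finset.card_univ, Fintype.card_fin]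
    omega
  obtain ⟨S, hSsupp, hSsub, hScard⟩ :=
    Finset.exists_subsuperset_card_eq hsuppsub hsparse hcardle
  have hdisj : Disjoint S T' := by
    rw [Finset.disjoint_left]
    intro a haS haT'
    have := hSsub haS
    simp only [Finset.mem_sdiff, Finset.mem_univ, true_and] at this
    exact this haT'
  obtain ⟨i, ⟨j, hjT', hMij⟩, hzero⟩ := hM S T' hdisj hScard hT'card
  have hMij1 : M i j = 1 := (hbin i j).resolve_left hMij
  have hsum0 : (∑ t, M i t * x t) = 0 := by
    apply Finset.sum_eq_zero
    intro t _
    by_cases hx : x t = 0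
    · simp [hx]
    · have ht : t ∈ supp := by
        simp only [hsupp, Finset.mem_filter, Finset.mem_univ, true_and]; exact hx
      have := hzero t (hSsupp ht)
      simp [this]
  have hjT : j ∈ T := (Finset.sdiff_subset) (hT'sub hjT')
  simp only [T, Finset.mem_filter, Finset.mem_univ, true_and] at hjT
  exact hjT i hMij1 (by rw [hsum0, Real.sign_zero])
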